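/- Let $T$ be the singular value soft-thresholding operator: for $C \in \mathbb{R}^{m \times n}$ with SVD $C = U D V^{\top}$, define $T_{\lambda}(C) = U D_{\lambda} V^{\top}$ where $(D_{\lambda})_{ii} = \max\{0, D_{ii} - \lambda\}$ for the (nonnegative) singular values. Then for any $\lambda > 0$ and $C \in \mathbb{R}^{m \times n}$, $T_{\lambda}(C) = \arg\min_{B \in \mathbb{R}^{m \times n}} \left\{ \frac{1}{2}\|B - C\|_F^2 + \lambda \|B\|_* \right\}$, and the minimizer is unique. -/

import Mathlib

open Matrix

/-- The nuclear norm of a real matrix: the sum of its singular values. -/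
noncomputable def nuclearNorm {m n : Type*} [Fintype m] [Fintype n] [DecidableEq n]
    (M : Matrix m n ℝ) : ℝ :=
  ∑ i, Real.sqrt ((Matrix.isHermitian_conjTranspose_mul_self M).eigenvalues i)

/-- Squared Frobenius norm. -/
def frobSq {m n : Type*} [Fintype m] [Fintype n] (M : Matrix m n ℝ) : ℝ :=
  ∑ i, ∑ j, (M i j) ^ 2

/-!
Put `G = C - T = U (D - D_λ) Vᵀ`. Entrywise `D - D_λ = min D λ`, so `‖G‖_op ≤ λ`, and
`⟨T, G⟩ = λ ‖T‖_*` because `D_λ` is nonzero only where `D - D_λ = λ`; that is, `G` is `λ` times a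
subgradient of the nuclear norm at `T`. With the duality `⟨B, G⟩ ≤ ‖G‖_op ‖B‖_*` the expansion of
`‖B - C‖_F² = ‖(B - T) + (T - C)‖_F²` gives, for every `B`,
`½‖B - C‖_F² + λ‖B‖_* ≥ ½‖T - C‖_F² + λ‖T‖_* + ½‖B - T‖_F²`,
which is minimality and uniqueness at once.

The bound `‖G‖_op ≤ λ` is expressed in the Loewner order as `Gᵀ G ≤ λ² 1`.
-/

open scoped MatrixOrder

theorem Matrix.transpose_mul_apply_self_le {m n : Type*} [Fintype m] (P Q : Matrix m n ℝ)
    (j : n) : (Pᵀ * Q) j j ≤ √((Pᵀ * P) j j) * √((Qᵀ * Q) j j) := by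
  simpa only [mul_apply, transpose_apply, sq] using
    Real.sum_mul_le_sqrt_mul_sqrt Finset.univ (fun i => P i j) (fun i => Q i j)

section FiniteIndex

variable {m n : Type*} [Fintype m] [Fintype n]

theorem Matrix.trace_transpose_mul_eq_sum (X Y : Matrix m n ℝ) :
    (Xᵀ * Y).trace = ∑ i, ∑ j, X i j * Y i j := by
  rw [Finset.sum_comm]
  simp [trace, mul_apply]

theorem Matrix.transpose_conj_mul_conj {R : Type*} [CommSemiring R] [DecidableEq m]
    {U : Matrix m m R} (hU : Uᵀ * U = 1) (V : Matrix n n R) (A B : Matrix m n R) :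
    (U * A * Vᵀ)ᵀ * (U * B * Vᵀ) = V * (Aᵀ * B) * Vᵀ := by
  simp only [transpose_mul, transpose_transpose, Matrix.mul_assoc]
  rw [← Matrix.mul_assoc Uᵀ U, hU, Matrix.one_mul]

theorem frobSq_eq_trace (X : Matrix m n ℝ) : frobSq X = (Xᵀ * X).trace := by
  simp [trace_transpose_mul_eq_sum, frobSq, sq]

theorem frobSq_nonneg (X : Matrix m n ℝ) : 0 ≤ frobSq X := by
  unfold frobSq
  positivity

theorem frobSq_eq_zero_iff {X : Matrix m n ℝ} : frobSq X = 0 ↔ X = 0 := by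
  simp [frobSq, Fintype.sum_eq_zero_iff_of_nonneg, Pi.le_def, sq_nonneg, funext_iff,
    Finset.sum_nonneg, ← Matrix.ext_iff]

theorem frobSq_add (X Y : Matrix m n ℝ) :
    frobSq (X + Y) = frobSq X + 2 * (Xᵀ * Y).trace + frobSq Y := by
  have hYX : (Yᵀ * X).trace = (Xᵀ * Y).trace := by
    rw [← trace_transpose, transpose_mul, transpose_transpose]
  simp only [frobSq_eq_trace, transpose_add, Matrix.add_mul, Matrix.mul_add, trace_add, hYX]
  ring

variable [DecidableEq n]

theorem nuclearNorm_eq_trace_sqrt (M : Matrix m n ℝ) :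
    nuclearNorm M = (CFC.sqrt (Mᴴ * M)).trace := by
  rw [CFC.sqrt_eq_cfc, cfc_nnreal_eq_real _ _ (posSemidef_conjTranspose_mul_self M).nonneg,
    (isHermitian_conjTranspose_mul_self M).cfc_eq, IsHermitian.cfc,
    Unitary.conjStarAlgAut_apply, trace_mul_cycle, Unitary.coe_star_mul_self, Matrix.one_mul,
    trace_diagonal, nuclearNorm]
  refine Finset.sum_congr rfl fun i _ => ?_
  simp only [Function.comp_apply, Real.coe_sqrt, Real.coe_toNNReal']
  rw [max_eq_left (eigenvalues_conjTranspose_mul_self_nonneg M i)]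
  rfl

theorem nuclearNorm_eq_trace_of_mul_self_eq {M : Matrix m n ℝ} {S : Matrix n n ℝ}
    (hS : S.PosSemidef) (hSM : S * S = Mᴴ * M) : nuclearNorm M = S.trace := by
  rw [nuclearNorm_eq_trace_sqrt,
    (CFC.sqrt_eq_iff _ _ (posSemidef_conjTranspose_mul_self M).nonneg hS.nonneg).mpr hSM]

/-- In an orthonormal eigenbasis `w_j` of `BᵀB`, `⟨G, B⟩ = ∑ ⟨G w_j, B w_j⟩` and
`‖B w_j‖ = σ_j(B)`, `‖G w_j‖ ≤ λ`. -/
theorem trace_transpose_mul_le_mul_nuclearNorm {lam : ℝ} (hlam : 0 ≤ lam) {G : Matrix m n ℝ}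
    (hG : Gᵀ * G ≤ lam ^ 2 • 1) (B : Matrix m n ℝ) :
    (Gᵀ * B).trace ≤ lam * nuclearNorm B := by
  set hH := isHermitian_conjTranspose_mul_self B
  set W : Matrix n n ℝ := (hH.eigenvectorUnitary : Matrix n n ℝ)
  have hW : Wᵀ * W = 1 := by
    simpa [W, star_eq_conjTranspose] using Unitary.coe_star_mul_self hH.eigenvectorUnitary
  have hBW : (B * W)ᵀ * (B * W) = diagonal hH.eigenvalues := by
    simpa [W, star_eq_conjTranspose, Matrix.mul_assoc, Unitary.conjStarAlgAut_apply] using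
      hH.conjStarAlgAut_star_eigenvectorUnitary
  have hGW (j : n) : ((G * W)ᵀ * (G * W)) j j ≤ lam ^ 2 := by
    have := (le_iff.mp hG).conjTranspose_mul_mul_same W
    simpa [Matrix.sub_mul, Matrix.mul_sub, hW, Matrix.mul_assoc] using this.diag_nonneg (i := j)
  calc (Gᵀ * B).trace = ((G * W)ᵀ * (B * W)).trace := by
        rw [transpose_mul, Matrix.mul_assoc, ← Matrix.mul_assoc Gᵀ, ← Matrix.mul_assoc,
          trace_mul_cycle, mul_eq_one_comm.mp hW, Matrix.one_mul]
    _ ≤ ∑ j, √(((G * W)ᵀ * (G * W)) j j) * √(hH.eigenvalues j) := by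
        refine Finset.sum_le_sum fun j _ => ?_
        exact (transpose_mul_apply_self_le (G * W) (B * W) j).trans_eq
          (by rw [hBW, diagonal_apply_eq])
    _ ≤ ∑ j, lam * √(hH.eigenvalues j) := by
        gcongr with j
        exact (Real.sqrt_le_sqrt (hGW j)).trans_eq (Real.sqrt_sq hlam)
    _ = lam * nuclearNorm B := by rw [nuclearNorm, Finset.mul_sum]

noncomputable def nuclearProxObjective (lam : ℝ) (C B : Matrix m n ℝ) : ℝ :=
  (1 / 2) * frobSq (B - C) + lam * nuclearNorm B

theorem nuclearProxObjective_add_half_frobSq_le {lam : ℝ} (hlam : 0 ≤ lam)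
    {C T : Matrix m n ℝ} (hinner : (Tᵀ * (C - T)).trace = lam * nuclearNorm T)
    (hop : (C - T)ᵀ * (C - T) ≤ lam ^ 2 • 1) (B : Matrix m n ℝ) :
    nuclearProxObjective lam C T + (1 / 2) * frobSq (B - T) ≤ nuclearProxObjective lam C B := by
  have hexpand := frobSq_add (B - T) (T - C)
  rw [sub_add_sub_cancel] at hexpand
  have hcross : ((B - T)ᵀ * (T - C)).trace = (Tᵀ * (C - T)).trace - ((C - T)ᵀ * B).trace := by
    rw [← neg_sub C T, transpose_sub, Matrix.mul_neg, Matrix.sub_mul, trace_neg, trace_sub,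
      ← trace_transpose (Bᵀ * (C - T)), transpose_mul, transpose_transpose]
    ring
  have hdual := trace_transpose_mul_le_mul_nuclearNorm hlam hop B
  unfold nuclearProxObjective
  linarith

end FiniteIndex

theorem abs_sub_max_sub_le {d lam : ℝ} (hd : 0 ≤ d) (hlam : 0 ≤ lam) :
    |d - max (d - lam) 0| ≤ lam := by
  rcases le_total d lam with h | h
  · rw [max_eq_right (by linarith), sub_zero, abs_of_nonneg hd]
    exact h
  · rw [max_eq_left (by linarith), sub_sub_cancel, abs_of_nonneg hlam]

theorem max_sub_mul_sub_max (d lam : ℝ) :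
    max (d - lam) 0 * (d - max (d - lam) 0) = lam * max (d - lam) 0 := by
  rcases le_total d lam with h | h
  · rw [max_eq_right (by linarith)]
    ring
  · rw [max_eq_left (by linarith)]
    ring

namespace Matrix

variable {m n : ℕ}

def IsRectDiagonal {R : Type*} [Zero R] (M : Matrix (Fin m) (Fin n) R) : Prop :=
  ∀ (i : Fin m) (j : Fin n), (i : ℕ) ≠ (j : ℕ) → M i j = 0

theorem IsRectDiagonal.sum_apply {R : Type*} [AddCommMonoid R] {M : Matrix (Fin m) (Fin n) R}
    (hM : M.IsRectDiagonal) (j : Fin n) :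
    ∑ i, M i j = if h : (j : ℕ) < m then M ⟨j, h⟩ j else 0 := by
  split_ifs with h
  · exact Finset.sum_eq_single _ (fun i _ hi => hM i j fun hij => hi (Fin.ext hij)) (by simp)
  · exact Finset.sum_eq_zero fun i _ => hM i j fun hij => h (hij ▸ i.isLt)

theorem IsRectDiagonal.transpose_mul_self {R : Type*} [CommSemiring R]
    {M : Matrix (Fin m) (Fin n) R} (hM : M.IsRectDiagonal) :
    Mᵀ * M = diagonal fun j => (∑ i, M i j) ^ 2 := by
  ext j k
  have hMk : IsRectDiagonal (of fun i j => M i j * M i k) := fun i j h => by simp [hM i j h]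
  have hcol := hMk.sum_apply j
  simp only [of_apply] at hcol
  simp only [mul_apply, transpose_apply, hcol, diagonal_apply, hM.sum_apply]
  rcases eq_or_ne j k with rfl | hjk
  · by_cases h : (j : ℕ) < m <;> simp [h, sq]
  · split_ifs with h
    · rw [hM _ k fun hjk' => hjk (Fin.ext hjk'), mul_zero]
    · rfl

theorem IsRectDiagonal.sq_sum_apply_le {M : Matrix (Fin m) (Fin n) ℝ} (hM : M.IsRectDiagonal)
    {lam : ℝ} (hMlam : ∀ i j, |M i j| ≤ lam) (j : Fin n) : (∑ i, M i j) ^ 2 ≤ lam ^ 2 := by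
  rw [hM.sum_apply]
  split_ifs with h
  · exact sq_le_sq.mpr ((hMlam _ _).trans (le_abs_self lam))
  · rw [sq (0 : ℝ), zero_mul]
    positivity

theorem IsRectDiagonal.transpose_conj_mul_conj_le {M : Matrix (Fin m) (Fin n) ℝ}
    (hM : M.IsRectDiagonal) {lam : ℝ} (hMlam : ∀ i j, |M i j| ≤ lam)
    {U : Matrix (Fin m) (Fin m) ℝ} {V : Matrix (Fin n) (Fin n) ℝ}
    (hU : Uᵀ * U = 1) (hV : Vᵀ * V = 1) :
    (U * M * Vᵀ)ᵀ * (U * M * Vᵀ) ≤ lam ^ 2 • 1 := by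
  have hlam : lam ^ 2 • (1 : Matrix (Fin n) (Fin n) ℝ) =
      V * diagonal (fun _ => lam ^ 2) * Vᵀ := by
    rw [← smul_one_eq_diagonal, Matrix.mul_smul, Matrix.mul_one, Matrix.smul_mul,
      mul_eq_one_comm.mp hV]
  rw [transpose_conj_mul_conj hU, hM.transpose_mul_self, le_iff, hlam, ← Matrix.sub_mul,
    ← Matrix.mul_sub, diagonal_sub, ← conjTranspose_eq_transpose_of_trivial]
  exact PosSemidef.mul_mul_conjTranspose_same
    (PosSemidef.diagonal fun j => sub_nonneg.mpr (hM.sq_sum_apply_le hMlam j)) V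

/-- `V diag(∑ᵢ Mᵢⱼ) Vᵀ` is the positive square root of `(U M Vᵀ)ᵀ (U M Vᵀ)`. -/
theorem IsRectDiagonal.nuclearNorm_conj {M : Matrix (Fin m) (Fin n) ℝ} (hM : M.IsRectDiagonal)
    (hM0 : ∀ i j, 0 ≤ M i j) {U : Matrix (Fin m) (Fin m) ℝ} {V : Matrix (Fin n) (Fin n) ℝ}
    (hU : Uᵀ * U = 1) (hV : Vᵀ * V = 1) :
    nuclearNorm (U * M * Vᵀ) = ∑ i, ∑ j, M i j := by
  set S := V * diagonal (fun j => ∑ i, M i j) * Vᵀ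
  have hS : S.PosSemidef := by
    simpa [S] using PosSemidef.mul_mul_conjTranspose_same
      (PosSemidef.diagonal fun j => Finset.sum_nonneg fun i _ => hM0 i j) V
  have hSS : S * S = (U * M * Vᵀ)ᴴ * (U * M * Vᵀ) := by
    rw [conjTranspose_eq_transpose_of_trivial, transpose_conj_mul_conj hU, hM.transpose_mul_self]
    simp only [S, Matrix.mul_assoc, ← Matrix.mul_assoc Vᵀ V, hV, Matrix.one_mul, sq,
      ← diagonal_mul_diagonal]
  rw [nuclearNorm_eq_trace_of_mul_self_eq hS hSS, trace_mul_cycle, hV, Matrix.one_mul,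
    trace_diagonal, Finset.sum_comm]

def softThresholdDiagonal (lam : ℝ) (D : Matrix (Fin m) (Fin n) ℝ) : Matrix (Fin m) (Fin n) ℝ :=
  of fun i j => if (i : ℕ) = (j : ℕ) then max (D i j - lam) 0 else 0

theorem isRectDiagonal_softThresholdDiagonal (lam : ℝ) (D : Matrix (Fin m) (Fin n) ℝ) :
    (softThresholdDiagonal lam D).IsRectDiagonal := fun _ _ h => if_neg h

theorem IsRectDiagonal.softThresholdDiagonal_apply {D : Matrix (Fin m) (Fin n) ℝ}
    (hD : D.IsRectDiagonal) {lam : ℝ} (hlam : 0 ≤ lam) (i : Fin m) (j : Fin n) :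
    softThresholdDiagonal lam D i j = max (D i j - lam) 0 := by
  by_cases h : (i : ℕ) = (j : ℕ)
  · exact if_pos h
  · rw [isRectDiagonal_softThresholdDiagonal lam D i j h, hD i j h, zero_sub,
      max_eq_right (neg_nonpos.mpr hlam)]

theorem softThresholdDiagonal_subgradient {lam : ℝ} (hlam : 0 ≤ lam)
    {U : Matrix (Fin m) (Fin m) ℝ} {V : Matrix (Fin n) (Fin n) ℝ}
    {C D T : Matrix (Fin m) (Fin n) ℝ} (hU : Uᵀ * U = 1) (hV : Vᵀ * V = 1)
    (hD : D.IsRectDiagonal) (hD0 : ∀ i j, 0 ≤ D i j)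
    (hC : C = U * D * Vᵀ) (hT : T = U * softThresholdDiagonal lam D * Vᵀ) :
    (Tᵀ * (C - T)).trace = lam * nuclearNorm T ∧ (C - T)ᵀ * (C - T) ≤ lam ^ 2 • 1 := by
  have hDl := isRectDiagonal_softThresholdDiagonal lam D
  have hDl_apply := hD.softThresholdDiagonal_apply hlam
  have hres : C - T = U * (D - softThresholdDiagonal lam D) * Vᵀ := by
    rw [hC, hT, Matrix.mul_sub, Matrix.sub_mul]
  have hres_diag : (D - softThresholdDiagonal lam D).IsRectDiagonal := fun i j h => by
    rw [sub_apply, hD i j h, hDl i j h, sub_zero]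
  refine ⟨?_, ?_⟩
  · rw [hres, hT, transpose_conj_mul_conj hU, trace_mul_cycle, hV, Matrix.one_mul,
      trace_transpose_mul_eq_sum,
      hDl.nuclearNorm_conj (fun i j => (hDl_apply i j).symm ▸ le_max_right _ _) hU hV]
    simp only [Finset.mul_sum, sub_apply, hDl_apply, max_sub_mul_sub_max]
  · rw [hres]
    refine hres_diag.transpose_conj_mul_conj_le (fun i j => ?_) hU hV
    rw [sub_apply, hDl_apply]
    exact abs_sub_max_sub_le (hD0 i j) hlam

end Matrix

/-- Singular value soft-thresholding is the proximal operator of the nuclear norm: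
for `C = Uo D Voᵀ` an SVD, `T_λ(C) = Uo D_λ Voᵀ` is the unique minimizer of
`B ↦ ½‖B - C‖_F² + λ‖B‖_*`. -/
theorem svt_prox
    {m n : ℕ} (lam : ℝ) (hlam : 0 < lam)
    (C : Matrix (Fin m) (Fin n) ℝ)
    (Uo : Matrix (Fin m) (Fin m) ℝ) (Vo : Matrix (Fin n) (Fin n) ℝ)
    (D : Matrix (Fin m) (Fin n) ℝ)
    (hUo : Uoᵀ * Uo = 1) (hVo : Voᵀ * Vo = 1)
    (hDdiag : ∀ (i : Fin m) (j : Fin n), (i : ℕ) ≠ (j : ℕ) → D i j = 0)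
    (hDpos : ∀ i j, 0 ≤ D i j)
    (hC : C = Uo * D * Voᵀ)
    (T : Matrix (Fin m) (Fin n) ℝ)
    (hT : T = Uo * (Matrix.of fun (i : Fin m) (j : Fin n) =>
        if (i : ℕ) = (j : ℕ) then max (D i j - lam) 0 else 0) * Voᵀ) :
    (∀ B : Matrix (Fin m) (Fin n) ℝ,
        (1 / 2) * frobSq (T - C) + lam * nuclearNorm T ≤
          (1 / 2) * frobSq (B - C) + lam * nuclearNorm B) ∧
    (∀ B : Matrix (Fin m) (Fin n) ℝ,
        (1 / 2) * frobSq (B - C) + lam * nuclearNorm B =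
          (1 / 2) * frobSq (T - C) + lam * nuclearNorm T → B = T) := by
  obtain ⟨hinner, hop⟩ := softThresholdDiagonal_subgradient hlam.le hUo hVo hDdiag hDpos hC hT
  have hgrowth (B : Matrix (Fin m) (Fin n) ℝ) :=
    nuclearProxObjective_add_half_frobSq_le hlam.le hinner hop B
  unfold nuclearProxObjective at hgrowth
  refine ⟨fun B => by linarith [hgrowth B, frobSq_nonneg (B - T)], fun B hB => ?_⟩
  have hdist : frobSq (B - T) = 0 := le_antisymm (by linarith [hgrowth B]) (frobSq_nonneg _)
  exact sub_eq_zero.mp (frobSq_eq_zero_iff.mp hdist)
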